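/- Let λ > 0 and a > 2, and let p_λ be the SCAD penalty: p_λ(u) = λ|u| for |u| ≤ λ; p_λ(u) = (2aλ|u| − u² − λ²)/(2(a−1)) for λ < |u| ≤ aλ; p_λ(u) = (a+1)λ²/2 for |u| > aλ. Then the function u ↦ p_λ(u) + u²/(2(a−1)) is convex on ℝ. (Hence the SCAD penalty is weakly convex with weak-convexity parameter μ = 1/(a−1).) -/

import Mathlib

/-- The SCAD penalty with tuning parameter `λ > 0` and shape parameter `a > 2`. -/
noncomputable def scad (lam a u : ℝ) : ℝ :=
  if |u| ≤ lam then lam * |u|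
  else if |u| ≤ a * lam then (2 * a * lam * |u| - u ^ 2 - lam ^ 2) / (2 * (a - 1))
  else (a + 1) * lam ^ 2 / 2

/-!
With `t = |u|`, the function is `g t` for
`g t = (2aλt − λ² + (λ − t)₊² + (t − aλ)₊²) / (2(a − 1))`: an affine function plus squared ramps,
hence convex on all of `ℝ`. A convex function that is nondecreasing on `[0, ∞)` stays convex when
composed with `|·|`, and a convex `g` is nondecreasing on `[0, ∞)` as soon as `g w ≤ g 0` for some
`w < 0`; here `w = −(a − 1)λ` gives `g w = −(a − 1)λ²/2 ≤ 0 = g 0`.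
-/

open Set

theorem ConvexOn.monotoneOn_Ici_of_le {𝕜 β : Type*} [Field 𝕜] [LinearOrder 𝕜]
    [IsStrictOrderedRing 𝕜] [AddCommMonoid β] [LinearOrder β] [IsOrderedCancelAddMonoid β]
    [Module 𝕜 β] [PosSMulStrictMono 𝕜 β] {s : Set 𝕜} {f : 𝕜 → β} {w x : 𝕜}
    (hf : ConvexOn 𝕜 s f) (hw : w ∈ s) (hwx : w < x) (hfwx : f w ≤ f x) :
    MonotoneOn f (s ∩ Ici x) := by
  intro y ⟨hy, hxy⟩ z ⟨hz, hxz⟩ hyz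
  have hfxy : f x ≤ f y := hf.le_right_of_left_le'' hw hy hwx hxy hfwx
  exact hf.le_right_of_left_le'' hw hz (hwx.trans_le hxy) hyz (hfwx.trans hfxy)

theorem ConvexOn.comp_norm {E : Type*} [SeminormedAddCommGroup E] [NormedSpace ℝ E]
    [NontrivialTopology E] {g : ℝ → ℝ} (hg : ConvexOn ℝ (Ici 0) g)
    (hg_mono : MonotoneOn g (Ici 0)) : ConvexOn ℝ univ (fun x : E => g ‖x‖) := by
  have himage : (norm : E → ℝ) '' univ = Ici 0 := by rw [image_univ, range_norm]
  exact (himage ▸ hg).comp convexOn_univ_norm (himage ▸ hg_mono)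

theorem ConvexOn.posPart_sq {E : Type*} [AddCommGroup E] [Module ℝ E] {s : Set E} {f : E → ℝ}
    (hf : ConvexOn ℝ s f) : ConvexOn ℝ s (fun x => (f x)⁺ ^ 2) :=
  (hf.sup (convexOn_const 0 hf.1)).pow (fun _ _ => le_sup_right) 2

noncomputable def scadProfile (lam a t : ℝ) : ℝ :=
  (2 * a * lam * t - lam ^ 2 + (lam - t)⁺ ^ 2 + (t - a * lam)⁺ ^ 2) / (2 * (a - 1))

theorem scadProfile_convexOn {lam a : ℝ} (ha : 1 < a) :
    ConvexOn ℝ univ (scadProfile lam a) := by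
  have hlinear : ConvexOn ℝ univ (fun t : ℝ => 2 * a * lam * t) :=
    (LinearMap.mul ℝ ℝ (2 * a * lam)).convexOn convex_univ
  have hsum : ConvexOn ℝ univ
      (fun t => 2 * a * lam * t - lam ^ 2 + (lam - t)⁺ ^ 2 + (t - a * lam)⁺ ^ 2) :=
    ((hlinear.add_const (-lam ^ 2)).add
      ((convexOn_const lam convex_univ).sub (concaveOn_id convex_univ)).posPart_sq).add
      ((convexOn_id convex_univ).sub (concaveOn_const (a * lam) convex_univ)).posPart_sq
  have hc : 0 ≤ (2 * (a - 1))⁻¹ := by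
    have : 0 < a - 1 := by linarith
    positivity
  have hprofile : scadProfile lam a = fun t => (2 * (a - 1))⁻¹ •
      (2 * a * lam * t - lam ^ 2 + (lam - t)⁺ ^ 2 + (t - a * lam)⁺ ^ 2) := by
    ext t
    rw [scadProfile, smul_eq_mul, div_eq_inv_mul]
  rw [hprofile]
  exact hsum.smul hc

theorem scadProfile_monotoneOn {lam a : ℝ} (hlam : 0 < lam) (ha : 1 < a) :
    MonotoneOn (scadProfile lam a) (Ici 0) := by
  have ha1 : 0 < a - 1 := by linarith
  have hmin : scadProfile lam a (-((a - 1) * lam)) ≤ scadProfile lam a 0 := by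
    rw [scadProfile, scadProfile, posPart_of_nonneg (by nlinarith), posPart_of_nonpos (by nlinarith),
      posPart_of_nonneg (by linarith), posPart_of_nonpos (by nlinarith)]
    exact div_le_div_of_nonneg_right (by nlinarith [sq_nonneg ((a - 1) * lam)]) (by linarith)
  simpa only [univ_inter] using (scadProfile_convexOn ha).monotoneOn_Ici_of_le (mem_univ _)
    (by nlinarith : -((a - 1) * lam) < 0) hmin

theorem scad_add_sq_eq_scadProfile {lam a : ℝ} (hlam : 0 ≤ lam) (ha : 1 < a) (u : ℝ) :
    scad lam a u + u ^ 2 / (2 * (a - 1)) = scadProfile lam a |u| := by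
  have hden : a - 1 ≠ 0 := by linarith
  rw [scad, scadProfile, ← sq_abs u]
  split_ifs with hinner hmiddle
  · rw [posPart_of_nonneg (by linarith), posPart_of_nonpos (by nlinarith)]
    field_simp
    ring
  · rw [posPart_of_nonpos (by linarith), posPart_of_nonpos (by linarith)]
    field_simp
    ring
  · rw [posPart_of_nonpos (by linarith), posPart_of_nonneg (by linarith)]
    field_simp
    ring

/-- The SCAD penalty is weakly convex with parameter `μ = 1/(a−1)`:
`u ↦ p_λ(u) + u²/(2(a−1))` is convex on `ℝ`. -/
theorem scad_weakly_convex (lam a : ℝ) (hlam : 0 < lam) (ha : 2 < a) :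
    ConvexOn ℝ Set.univ (fun u : ℝ => scad lam a u + u ^ 2 / (2 * (a - 1))) := by
  have ha1 : 1 < a := by linarith
  have hprofile : ConvexOn ℝ (Ici 0) (scadProfile lam a) :=
    (scadProfile_convexOn ha1).subset (subset_univ _) (convex_Ici 0)
  simp_rw [scad_add_sq_eq_scadProfile hlam.le ha1, ← Real.norm_eq_abs]
  exact hprofile.comp_norm (scadProfile_monotoneOn hlam ha1)
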